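/- For the QBF Q-Majority_n, the polynomial strategy s_u = -x_1 - ... - x_n + n/2 - 1/4 is a winning strategy for the universal player in variant 1 of the score game: for every Boolean assignment α satisfying the matrix, the score s_u(α)·(2u(α)-1) is strictly positive. Consequently Q-Majority_n has a Q-SOS refutation of Q-size n+1 (linear in n). -/

import Mathlib

open MvPolynomial

/-- The rational value of a Boolean. -/
noncomputable def bval (b : Bool) : ℚ := if b then 1 else 0

/-- A Q-SOS refutation of a QBF over variables `Fin n` (in prefix order), with
existential variables marked by `E` and matrix encoded by the polynomials in `P`:
an identity `Σ_{p∈P} q_p·p + Σ_u q_u·(1-2u) + Σ s² + 1 = 0` where each `q_u`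
(for universal `u`) only mentions variables left of `u`. -/
structure QSOS (n : ℕ) (E : Fin n → Bool) (P : Finset (MvPolynomial (Fin n) ℚ)) where
  qp : MvPolynomial (Fin n) ℚ → MvPolynomial (Fin n) ℚ
  qu : Fin n → MvPolynomial (Fin n) ℚ
  sq : Multiset (MvPolynomial (Fin n) ℚ)
  hvars : ∀ u : Fin n, E u = false → ∀ v ∈ (qu u).vars, v < u
  huz : ∀ u : Fin n, E u = true → qu u = 0
  hid : ∑ p ∈ P, qp p * p
      + ∑ u : Fin n, qu u * (1 - 2 * X u)
      + (sq.map fun s => s ^ 2).sum + 1 = 0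

/-- Q-size of a Q-SOS refutation: the number of monomials in the `q_u` polynomials. -/
noncomputable def QSOS.qsize {n : ℕ} {E : Fin n → Bool}
    {P : Finset (MvPolynomial (Fin n) ℚ)} (π : QSOS n E P) : ℕ :=
  ∑ u : Fin n, (π.qu u).support.card

/-- Existential Q-degree of a Q-SOS refutation: the largest number of existential
variables (with multiplicity) in a monomial of some `q_u`. -/
noncomputable def QSOS.exdeg {n : ℕ} {E : Fin n → Bool}
    {P : Finset (MvPolynomial (Fin n) ℚ)} (π : QSOS n E P) : ℕ :=
  Finset.univ.sup fun u : Fin n =>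
    (π.qu u).support.sup fun m => ∑ i ∈ Finset.univ.filter (fun i => E i = true), m i

namespace Stmt9Aux
open Finset

variable {σ : Type*} [Fintype σ] [DecidableEq σ]

noncomputable def eT (t : Finset σ) : MvPolynomial σ ℚ :=
  (∏ v ∈ t, X v) * ∏ v ∈ tᶜ, (1 - X v)

def indT (t : Finset σ) : σ → ℚ := fun v => if v ∈ t then 1 else 0

lemma L1 (P : Finset (MvPolynomial σ ℚ)) (hBool : ∀ v : σ, (X v ^ 2 - X v) ∈ P)
    (v : σ) (t : Finset σ) :
    X v * eT t - C (indT t v) * eT t ∈ Ideal.span (P : Set (MvPolynomial σ ℚ)) := by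
  by_cases hv : v ∈ t
  · have h1 : eT t = X v * ((∏ w ∈ t.erase v, X w) * ∏ w ∈ tᶜ, (1 - X w)) := by
      rw [eT, ← Finset.mul_prod_erase t X hv]; ring
    have hmem : (X v ^ 2 - X v : MvPolynomial σ ℚ) ∈ Ideal.span (P : Set (MvPolynomial σ ℚ)) :=
      Ideal.subset_span (hBool v)
    have h2 := Ideal.mul_mem_left _ ((∏ w ∈ t.erase v, X w) * ∏ w ∈ tᶜ, (1 - X w)) hmem
    convert h2 using 1
    rw [h1, indT, if_pos hv, C_1]; ring
  · have hv' : v ∈ tᶜ := Finset.mem_compl.2 hv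
    have h1 : eT t = (1 - X v) * ((∏ w ∈ t, X w) * ∏ w ∈ tᶜ.erase v, (1 - X w)) := by
      rw [eT, ← Finset.mul_prod_erase tᶜ _ hv']; ring
    have hmem : (X v ^ 2 - X v : MvPolynomial σ ℚ) ∈ Ideal.span (P : Set (MvPolynomial σ ℚ)) :=
      Ideal.subset_span (hBool v)
    have h2 := Ideal.mul_mem_left _ (-((∏ w ∈ t, X w) * ∏ w ∈ tᶜ.erase v, (1 - X w))) hmem
    convert h2 using 1
    rw [h1, indT, if_neg hv, C_0]; ring

lemma L2 (P : Finset (MvPolynomial σ ℚ)) (hBool : ∀ v : σ, (X v ^ 2 - X v) ∈ P)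
    (h : MvPolynomial σ ℚ) (t : Finset σ) :
    h * eT t - C (eval (indT t) h) * eT t ∈ Ideal.span (P : Set (MvPolynomial σ ℚ)) := by
  induction h using MvPolynomial.induction_on with
  | C a => simp
  | add p q hp hq =>
    have h3 := Ideal.add_mem _ hp hq
    convert h3 using 1
    rw [eval_add, C_add]; ring
  | mul_X p v hp =>
    have h1 := Ideal.mul_mem_left _ p (L1 P hBool v t)
    have h2 := Ideal.mul_mem_left _ (C (indT t v)) hp
    have h3 := Ideal.add_mem _ h1 h2
    convert h3 using 1
    rw [eval_mul, eval_X, C_mul]; ring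

lemma L3 : ∑ t ∈ (univ : Finset σ).powerset, eT t = 1 := by
  have h1 : (1 : MvPolynomial σ ℚ)
      = ∑ t ∈ (univ : Finset σ).powerset, (∏ i ∈ t, X i) * ∏ i ∈ univ \ t, (1 - X i) := by
    have := Finset.prod_add (fun v : σ => (X v : MvPolynomial σ ℚ)) (fun v => 1 - X v) univ
    simpa using this
  rw [h1]
  exact Finset.sum_congr rfl fun t ht => by rw [eT, Finset.compl_eq_univ_sdiff]

lemma L4 (P : Finset (MvPolynomial σ ℚ)) (hBool : ∀ v : σ, (X v ^ 2 - X v) ∈ P)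
    (h : MvPolynomial σ ℚ)
    (hh : ∀ t : Finset σ, (∀ p ∈ P, eval (indT t) p = 0) → eval (indT t) h = 0) :
    h ∈ Ideal.span (P : Set (MvPolynomial σ ℚ)) := by
  have key : h = ∑ t ∈ (univ : Finset σ).powerset, h * eT t := by
    rw [← Finset.mul_sum, L3, mul_one]
  rw [key]
  refine Ideal.sum_mem _ fun t _ => ?_
  by_cases hsat : ∀ p ∈ P, eval (indT t) p = 0
  · have h0 := hh t hsat
    have h2 := L2 P hBool h t
    rw [h0, map_zero, zero_mul, sub_zero] at h2
    exact h2
  · push_neg at hsat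
    obtain ⟨p, hpP, hpne⟩ := hsat
    have hpe := L2 P hBool p t
    have hpmem : p * eT t ∈ Ideal.span (P : Set (MvPolynomial σ ℚ)) :=
      Ideal.mul_mem_right _ _ (Ideal.subset_span hpP)
    have hce : C (eval (indT t) p) * eT t ∈ Ideal.span (P : Set (MvPolynomial σ ℚ)) := by
      have := Ideal.sub_mem _ hpmem hpe
      simpa using this
    have het : eT t ∈ Ideal.span (P : Set (MvPolynomial σ ℚ)) := by
      have := Ideal.mul_mem_left _ (C (eval (indT t) p)⁻¹) hce
      rwa [← mul_assoc, ← C_mul, inv_mul_cancel₀ hpne, C_1, one_mul] at this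
    exact Ideal.mul_mem_left _ h het

lemma four_sq (q : ℚ) (hq : 0 ≤ q) : ∃ M : Multiset ℚ, (M.map (fun r => r ^ 2)).sum = q := by
  obtain ⟨a, b, c, d, habcd⟩ := Nat.sum_four_squares (q.num.toNat * q.den)
  refine ⟨{(a : ℚ) / q.den, (b : ℚ) / q.den, (c : ℚ) / q.den, (d : ℚ) / q.den}, ?_⟩
  have hden : (q.den : ℚ) ≠ 0 := by exact_mod_cast q.den_nz
  have hnum : ((q.num.toNat : ℚ)) = (q.num : ℚ) := by
    exact_mod_cast congrArg (Int.cast : ℤ → ℚ) (Int.toNat_of_nonneg (Rat.num_nonneg.2 hq))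
  have h2 : ((a : ℚ) ^ 2 + b ^ 2 + c ^ 2 + d ^ 2) = (q.num : ℚ) * q.den := by
    rw [← hnum]; exact_mod_cast congrArg (fun x : ℕ => (x : ℚ)) habcd
  have h3 : ((a:ℚ)^2 + b^2 + c^2 + d^2) / ((q.den : ℚ)^2) = q := by
    rw [h2, pow_two, mul_div_mul_right _ _ hden, Rat.num_div_den]
  simp only [Multiset.insert_eq_cons, Multiset.map_cons, Multiset.map_singleton,
    Multiset.sum_cons, Multiset.sum_singleton]
  have h4 : ((a:ℚ)/q.den)^2 + (((b:ℚ)/q.den)^2 + (((c:ℚ)/q.den)^2 + ((d:ℚ)/q.den)^2))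
      = ((a:ℚ)^2 + b^2 + c^2 + d^2) / ((q.den : ℚ)^2) := by ring
  rw [h4, h3]

noncomputable def Msq (q : ℚ) : Multiset ℚ :=
  if h : 0 ≤ q then (four_sq q h).choose else 0

lemma Msq_spec (q : ℚ) (h : 0 ≤ q) : ((Msq q).map (fun r => r ^ 2)).sum = q := by
  rw [Msq, dif_pos h]; exact (four_sq q h).choose_spec

lemma score_arith (n k : ℕ) (b : ℚ)
    (hcase : (n ≤ 2*k ∧ b = 0) ∨ (¬(n ≤ 2*k) ∧ b = 1)) :
    (1:ℚ)/4 ≤ (-(k:ℚ) + (n:ℚ)/2 - 1/4) * (2*b - 1) := by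
  rcases hcase with ⟨h, rfl⟩ | ⟨h, rfl⟩
  · have h' : (n:ℚ) ≤ 2*k := by exact_mod_cast h
    nlinarith [h']
  · have h' : (2*(k:ℚ) + 1) ≤ n := by
      have : 2*k + 1 ≤ n := by omega
      exact_mod_cast this
    nlinarith [h']

lemma eval_eT (t t0 : Finset σ) :
    eval (indT t0) (eT t) = if t = t0 then 1 else 0 := by
  rw [eT, map_mul, map_prod, map_prod]
  by_cases h : t = t0
  · subst h
    rw [if_pos rfl]
    have h1 : ∀ v ∈ t, eval (indT t) (X v) = 1 := fun v hv => by simp [indT, hv]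
    have h2 : ∀ v ∈ tᶜ, eval (indT t) ((1 : MvPolynomial σ ℚ) - X v) = 1 := fun v hv => by
      simp [indT, Finset.mem_compl.mp hv]
    rw [Finset.prod_congr rfl h1, Finset.prod_congr rfl h2, Finset.prod_const_one,
      Finset.prod_const_one, mul_one]
  · rw [if_neg h]
    have hex : ∃ v, (v ∈ t ∧ v ∉ t0) ∨ (v ∉ t ∧ v ∈ t0) := by
      by_contra hcon
      push_neg at hcon
      exact h (Finset.ext fun v => by
        have := hcon v
        tauto)
    obtain ⟨v, ⟨h1, h2⟩ | ⟨h1, h2⟩⟩ := hex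
    · rw [Finset.prod_eq_zero h1 (by simp [indT, h2]), zero_mul]
    · rw [Finset.prod_eq_zero (Finset.mem_compl.mpr h1)
        (by simp [indT, h2]), mul_zero]


section Maj

variable (n m : ℕ)

def un : Fin (n + 1 + m) := ⟨n, Nat.lt_of_lt_of_le (Nat.lt_succ_self n) (Nat.le_add_right _ _)⟩

def xi (i : Fin n) : Fin (n + 1 + m) := Fin.castLE (Nat.le_trans (Nat.le_succ n) (Nat.le_add_right _ _)) i

noncomputable def QU : MvPolynomial (Fin (n + 1 + m)) ℚ :=
  C (2 * (n:ℚ) - 1) + ∑ i : Fin n, C (-4 : ℚ) * X (xi n m i)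

noncomputable def F : MvPolynomial (Fin (n + 1 + m)) ℚ :=
  -1 - QU n m * (1 - 2 * X (un n m))

open Classical in
noncomputable def val (P : Finset (MvPolynomial (Fin (n + 1 + m)) ℚ))
    (t : Finset (Fin (n + 1 + m))) : ℚ :=
  if (∀ p ∈ P, eval (indT t) p = 0) then eval (indT t) (F n m) else 0

noncomputable def sqs (P : Finset (MvPolynomial (Fin (n + 1 + m)) ℚ)) :
    Multiset (MvPolynomial (Fin (n + 1 + m)) ℚ) :=
  (univ : Finset (Fin (n + 1 + m))).powerset.val.bind fun t =>
    (Msq (val n m P t)).map fun r => C r * eT t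

lemma eval_QU (t : Finset (Fin (n + 1 + m))) :
    eval (indT t) (QU n m)
      = 2 * (n:ℚ) - 1 - 4 * ((univ.filter fun i : Fin n => xi n m i ∈ t).card : ℚ) := by
  rw [QU, map_add, eval_C, map_sum]
  have h1 : ∀ i ∈ (univ : Finset (Fin n)),
      eval (indT t) (C (-4 : ℚ) * X (xi n m i)) = -4 * (if xi n m i ∈ t then (1:ℚ) else 0) := by
    intro i _
    rw [map_mul, eval_C, eval_X, indT]
  rw [Finset.sum_congr rfl h1, ← Finset.mul_sum, Finset.sum_boole]
  ring

lemma val_nonneg (P : Finset (MvPolynomial (Fin (n + 1 + m)) ℚ))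
    (hP : ∀ α : Fin (n + 1 + m) → Bool,
      (∀ p ∈ P, eval (fun i => bval (α i)) p = 0) →
      α ⟨n, Nat.lt_of_lt_of_le (Nat.lt_succ_self n) (Nat.le_add_right _ _)⟩
        = !decide (n ≤ 2 * (Finset.univ.filter
            (fun i : Fin n => α (Fin.castLE (Nat.le_trans (Nat.le_succ n) (Nat.le_add_right _ _)) i) = true)).card))
    (t : Finset (Fin (n + 1 + m))) : 0 ≤ val n m P t := by
  classical
  rw [val]
  split_ifs with hsat
  · -- the Boolean assignment corresponding to t
    set α : Fin (n + 1 + m) → Bool := fun v => decide (v ∈ t) with hα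
    have hba : (fun v => bval (α v)) = indT t := by
      funext v
      simp [bval, hα, indT]
    have hsat' : ∀ p ∈ P, eval (fun v => bval (α v)) p = 0 := by
      rw [hba]; exact hsat
    have hu := hP α hsat'
    set k : ℕ := (univ.filter fun i : Fin n => xi n m i ∈ t).card with hk
    have hfe : (Finset.univ.filter
        (fun i : Fin n => α (Fin.castLE (by omega) i) = true)).card = k := by
      rw [hk]
      congr 1
      apply Finset.filter_congr
      intro i _
      simp [hα, xi]
    rw [hfe] at hu
    have hFval : eval (indT t) (F n m)
        = 4 * ((-(k:ℚ) + (n:ℚ)/2 - 1/4) * (2 * (indT t (un n m)) - 1)) - 1 := by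
      have hF1 : eval (indT t) (F n m)
          = -1 - (eval (indT t) (QU n m)) * (1 - 2 * indT t (un n m)) := by
        simp [F]
      rw [hF1, eval_QU, ← hk]
      ring
    rw [hFval]
    by_cases hc : n ≤ 2 * k
    · have hut : un n m ∉ t := by
        have : α (un n m) = false := by
          rw [show (⟨n, by omega⟩ : Fin (n + 1 + m)) = un n m from rfl] at hu
          rw [hu]
          simp [hc]
        simpa [hα] using this
      have hb : indT t (un n m) = 0 := by simp [indT, hut]
      rw [hb]
      have := score_arith n k 0 (Or.inl ⟨hc, rfl⟩)
      linarith
    · have hut : un n m ∈ t := by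
        have : α (un n m) = true := by
          rw [show (⟨n, by omega⟩ : Fin (n + 1 + m)) = un n m from rfl] at hu
          rw [hu]
          simp [hc]
        simpa [hα] using this
      have hb : indT t (un n m) = 1 := by simp [indT, hut]
      rw [hb]
      have := score_arith n k 1 (Or.inr ⟨hc, rfl⟩)
      linarith
  · exact le_refl 0

lemma eval_sqs (P : Finset (MvPolynomial (Fin (n + 1 + m)) ℚ))
    (hval : ∀ t, 0 ≤ val n m P t) (t0 : Finset (Fin (n + 1 + m))) :
    eval (indT t0) (((sqs n m P).map fun s => s ^ 2).sum) = val n m P t0 := by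
  have h0 : (((sqs n m P).map fun s => s ^ 2).sum)
      = ∑ t ∈ (univ : Finset (Fin (n + 1 + m))).powerset,
          ((Msq (val n m P t)).map fun r => (C r * eT t) ^ 2).sum := by
    rw [sqs, Multiset.map_bind, Multiset.sum_bind]
    simp only [Multiset.map_map, Function.comp]
    rfl
  rw [h0, map_sum]
  have h1 : ∀ t ∈ (univ : Finset (Fin (n + 1 + m))).powerset,
      eval (indT t0) (((Msq (val n m P t)).map fun r => (C r * eT t) ^ 2).sum)
        = ((Msq (val n m P t)).map fun r => (r * eval (indT t0) (eT t)) ^ 2).sum := by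
    intro t _
    rw [map_multiset_sum, Multiset.map_map]
    congr 1
    apply Multiset.map_congr rfl
    intro r _
    simp [Function.comp, map_pow]
  rw [Finset.sum_congr rfl h1]
  rw [Finset.sum_eq_single t0]
  · rw [eval_eT, if_pos rfl]
    have : ∀ r ∈ Msq (val n m P t0), (r * 1) ^ 2 = r ^ 2 := fun r _ => by ring
    rw [Multiset.map_congr rfl this, Msq_spec _ (hval t0)]
  · intro t _ hne
    rw [eval_eT, if_neg hne]
    apply Multiset.sum_eq_zero
    intro x hx
    obtain ⟨r, _, rfl⟩ := Multiset.mem_map.mp hx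
    ring
  · intro h
    exact absurd (Finset.mem_powerset.mpr (Finset.subset_univ t0)) h

lemma G_mem (P : Finset (MvPolynomial (Fin (n + 1 + m)) ℚ))
    (hBool : ∀ v : Fin (n + 1 + m), (X v ^ 2 - X v) ∈ P)
    (hval : ∀ t, 0 ≤ val n m P t) :
    F n m - (((sqs n m P).map fun s => s ^ 2).sum)
      ∈ Ideal.span (P : Set (MvPolynomial (Fin (n + 1 + m)) ℚ)) := by
  apply L4 P hBool
  intro t hsat
  rw [map_sub, eval_sqs n m P hval t]
  have : val n m P t = eval (indT t) (F n m) := by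
    rw [val, if_pos hsat]
  rw [← this, sub_self]

lemma QU_support : (QU n m).support.card ≤ n + 1 := by
  classical
  rw [QU]
  refine le_trans (Finset.card_le_card (MvPolynomial.support_add)) ?_
  refine le_trans (Finset.card_union_le _ _) ?_
  have hC : (C (2 * (n:ℚ) - 1) : MvPolynomial (Fin (n + 1 + m)) ℚ).support.card ≤ 1 := by
    rw [C_apply, MvPolynomial.support_monomial]
    split_ifs <;> simp
  have hS : (∑ i : Fin n, C (-4 : ℚ) * X (xi n m i)).support.card ≤ n := by
    refine le_trans (Finset.card_le_card MvPolynomial.support_sum) ?_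
    refine le_trans (Finset.card_biUnion_le) ?_
    have : ∀ i : Fin n, ((C (-4 : ℚ) * X (xi n m i)).support).card ≤ 1 := by
      intro i
      rw [C_mul']
      refine le_trans (Finset.card_le_card (MvPolynomial.support_smul)) ?_
      rw [MvPolynomial.support_X]
      simp
    refine le_trans (Finset.sum_le_sum fun i (_ : i ∈ univ) => this i) ?_
    simp
  omega

lemma QU_vars : ∀ v ∈ (QU n m).vars, v < un n m := by
  classical
  intro v hv
  rw [QU] at hv
  have h1 := MvPolynomial.vars_add_subset _ _ hv
  rw [Finset.mem_union] at h1
  rcases h1 with h1 | h1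
  · rw [MvPolynomial.vars_C] at h1
    exact absurd h1 (Finset.notMem_empty v)
  · have h2 := MvPolynomial.vars_sum_subset univ (fun i : Fin n => C (-4 : ℚ) * X (xi n m i)) h1
    rw [Finset.mem_biUnion] at h2
    obtain ⟨i, _, hi⟩ := h2
    have h3 := MvPolynomial.vars_mul _ _ hi
    rw [Finset.mem_union, MvPolynomial.vars_C] at h3
    rcases h3 with h3 | h3
    · exact absurd h3 (Finset.notMem_empty v)
    · rw [MvPolynomial.vars_X] at h3
      rw [Finset.mem_singleton] at h3
      subst h3
      show (xi n m i : ℕ) < n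
      exact i.isLt

end Maj

end Stmt9Aux

/-- Q-Majority: variables are `x_1,…,x_n, u, t_1,…,t_m` (in this prefix order, indexed by
`Fin (n+1+m)` with `u` at position `n`, the unique universal variable), and `P` is any
encoding of the matrix `u ↮ Maj(x)` containing the Boolean axioms, so that any common
Boolean zero of `P` sets `u ≠ Maj(x₁,…,x_n)`. Then the polynomial strategy
`s_u = -x₁ - … - x_n + n/2 - 1/4` is winning for the universal player in variant 1 of the
score game: on every assignment satisfying the matrix the score `s_u·(2u-1)` is strictly
positive. Consequently `Q-Majority_n` has a Q-SOS refutation of Q-size at most `n+1`. -/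
theorem stmt_9 (n m : ℕ) (P : Finset (MvPolynomial (Fin (n + 1 + m)) ℚ))
    (hBool : ∀ v : Fin (n + 1 + m), (X v ^ 2 - X v) ∈ P)
    (hP : ∀ α : Fin (n + 1 + m) → Bool,
      (∀ p ∈ P, eval (fun i => bval (α i)) p = 0) →
      α ⟨n, by omega⟩
        = !decide (n ≤ 2 * (Finset.univ.filter
            (fun i : Fin n => α (Fin.castLE (by omega) i) = true)).card)) :
    (∀ α : Fin (n + 1 + m) → Bool,
      (∀ p ∈ P, eval (fun i => bval (α i)) p = 0) →
      0 < (-(∑ i : Fin n, bval (α (Fin.castLE (by omega) i))) + (n : ℚ) / 2 - 1 / 4)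
            * (2 * bval (α ⟨n, by omega⟩) - 1))
    ∧ ∃ π : QSOS (n + 1 + m) (fun v => !decide ((v : ℕ) = n)) P,
        π.qsize ≤ n + 1 := by
  classical
  constructor
  · -- part 1: winning strategy
    intro α hα
    set K := (Finset.univ.filter (fun i : Fin n => α (Fin.castLE (by omega) i) = true)).card
      with hK
    have hsum : (∑ i : Fin n, bval (α (Fin.castLE (by omega : n ≤ n+1+m) i))) = (K : ℚ) := by
      rw [hK]
      calc (∑ i : Fin n, bval (α (Fin.castLE (by omega : n ≤ n+1+m) i)))
          = ∑ i : Fin n, (if α (Fin.castLE (by omega : n ≤ n+1+m) i) = true then (1:ℚ) else 0) :=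
            Finset.sum_congr rfl (fun i _ => by simp [bval])
        _ = _ := by rw [Finset.sum_boole]
    have hu := hP α hα
    rw [hsum]
    by_cases hc : n ≤ 2 * K
    · have hb : bval (α ⟨n, by omega⟩) = 0 := by
        rw [hu, ← hK]; simp [hc, bval]
      rw [hb]
      have := Stmt9Aux.score_arith n K 0 (Or.inl ⟨hc, rfl⟩)
      linarith
    · have hb : bval (α ⟨n, by omega⟩) = 1 := by
        rw [hu, ← hK]; simp [hc, bval]
      rw [hb]
      have := Stmt9Aux.score_arith n K 1 (Or.inr ⟨hc, rfl⟩)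
      linarith
  · -- part 2: Q-SOS refutation
    have hval := Stmt9Aux.val_nonneg n m P hP
    have hG := Stmt9Aux.G_mem n m P hBool hval
    obtain ⟨qp, -, hqp⟩ := Submodule.mem_span_finset.mp hG
    refine ⟨⟨qp,
      (fun v => if v = Stmt9Aux.un n m then Stmt9Aux.QU n m else 0),
      Stmt9Aux.sqs n m P, ?_, ?_, ?_⟩, ?_⟩
    · -- hvars
      intro u hu v hv
      have hun : u = Stmt9Aux.un n m := by
        simp only [Bool.not_eq_false', decide_eq_true_eq] at hu
        exact Fin.ext hu
      subst hun
      rw [show (if Stmt9Aux.un n m = Stmt9Aux.un n m then Stmt9Aux.QU n m else 0)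
        = Stmt9Aux.QU n m from if_pos rfl] at hv
      exact Stmt9Aux.QU_vars n m v hv
    · -- huz
      intro u hu
      have hun : u ≠ Stmt9Aux.un n m := by
        simp only [Bool.not_eq_true', decide_eq_false_iff_not] at hu
        intro h
        exact hu (by rw [h]; rfl)
      exact if_neg hun
    · -- hid
      have hsum : ∑ u : Fin (n + 1 + m),
          (if u = Stmt9Aux.un n m then Stmt9Aux.QU n m else 0) * (1 - 2 * X u)
            = Stmt9Aux.QU n m * (1 - 2 * X (Stmt9Aux.un n m)) := by
        rw [Finset.sum_eq_single_of_mem (Stmt9Aux.un n m) (Finset.mem_univ _)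
          (fun b _ hb => by rw [if_neg hb, zero_mul])]
        rw [if_pos rfl]
      have hqp' : ∑ p ∈ P, qp p * p
          = Stmt9Aux.F n m - (((Stmt9Aux.sqs n m P).map fun s => s ^ 2).sum) := by
        rw [← hqp]
        exact Finset.sum_congr rfl fun p _ => by rw [smul_eq_mul]
      rw [hqp', hsum, Stmt9Aux.F]
      ring
    · -- qsize
      show (∑ u : Fin (n + 1 + m),
        ((if u = Stmt9Aux.un n m then Stmt9Aux.QU n m else 0).support).card) ≤ n + 1
      rw [Finset.sum_eq_single_of_mem (Stmt9Aux.un n m) (Finset.mem_univ _)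
        (fun b _ hb => by rw [if_neg hb]; simp)]
      rw [if_pos rfl]
      exact Stmt9Aux.QU_support n m
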